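/- arXiv:2403.06975 — 5 statements merged into one kernel-verified Lean document; each statement's English description precedes it below -/
import Mathlib

section
/- For every nonnegative integer k and every formal power series f, the coefficient of z^k in f(T(z)) equals the coefficient of z^k in f(z)(1-z)e^{kz}, where T(z) = sum_{m≥1} m^{m-1} z^m/m! is the tree function satisfying T(z) = z e^{T(z)}. -/
open PowerSeries Finset

/-- Composition `f(g)` of formal power series, valid when `g` has zero constant
term: the coefficient of `z^k` in `f(g)` only involves `g^i` for `i ≤ k`. -/
noncomputable def psComp (f g : PowerSeries ℚ) : PowerSeries ℚ :=
  PowerSeries.mk fun k => ∑ i ∈ Finset.range (k + 1),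
    PowerSeries.coeff i f * PowerSeries.coeff k (g ^ i)

/-- The tree function `T(z) = ∑_{m≥1} m^(m-1) z^m / m!`, satisfying `T = z e^T`. -/
noncomputable def treeFun : PowerSeries ℚ :=
  PowerSeries.mk fun m => if m = 0 then 0 else (m : ℚ) ^ (m - 1) / m.factorial

/-!
Write `E_a = e^{aT}`. If `[z^m] T^i = [z^(m-i)] (1-z) e^{mz}` for all `i ≤ m`, then
`[z^m] f(T) = [z^m] f(z)(1-z)e^{mz}` for every `f`; taking `f = e^{az}` gives
`[z^m] E_a = [z^m] (1-z) e^{(a+m)z}`, which for `a = 1` yields `[z^(m+1)] T = [z^m] E_1`.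
So if the coefficient formula holds below degree `k`, then `T ≡ z E_1 (mod z^(k+1))`, hence
`[z^k] T^i = [z^k] z^i E_1^i = [z^(k-i)] E_i`, and this is again known for `i ≥ 1`:
the formula propagates to degree `k` by strong induction.
-/

lemma coeff_pow_eq_of_X_pow_succ_dvd_sub {R : Type*} [CommRing R] {a b : PowerSeries R} {k : ℕ}
    (h : X ^ (k + 1) ∣ a - b) (i : ℕ) : coeff k (a ^ i) = coeff k (b ^ i) := by
  have := X_pow_dvd_iff.mp (h.trans (sub_dvd_pow_sub_pow a b i)) k k.lt_succ_self
  rwa [map_sub, sub_eq_zero] at this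

section Composition

variable {g : PowerSeries ℚ}

lemma coeff_pow_eq_zero_of_lt (hg : constantCoeff g = 0) {n i : ℕ} (h : n < i) :
    coeff n (g ^ i) = 0 :=
  X_pow_dvd_iff.mp (pow_dvd_pow_of_dvd (X_dvd_iff.mpr hg) i) n h

lemma psComp_eq_subst (hg : constantCoeff g = 0) (f : PowerSeries ℚ) :
    psComp f g = f.subst g := by
  ext n
  rw [coeff_subst' (HasSubst.of_constantCoeff_zero' hg),
    finsum_eq_sum_of_support_subset (s := range (n + 1))]
  · simp [psComp]
  · intro i hi
    by_contra hni
    rw [coe_range, Set.mem_Iio, not_lt] at hni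
    exact hi (by simp only [coeff_pow_eq_zero_of_lt hg (by omega : n < i), smul_zero])

lemma psComp_exp_pow (hg : constantCoeff g = 0) (i : ℕ) :
    psComp (exp ℚ) g ^ i = psComp (rescale (i : ℚ) (exp ℚ)) g := by
  rw [psComp_eq_subst hg, psComp_eq_subst hg, ← subst_pow (HasSubst.of_constantCoeff_zero' hg),
    exp_pow_eq_rescale_exp]

lemma coeff_psComp_eq_coeff_mul {h : PowerSeries ℚ} {k : ℕ}
    (hk : ∀ i ≤ k, coeff k (g ^ i) = coeff (k - i) h) (f : PowerSeries ℚ) :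
    coeff k (psComp f g) = coeff k (f * h) := by
  rw [psComp, coeff_mk, coeff_mul, Nat.sum_antidiagonal_eq_sum_range_succ_mk]
  refine sum_congr rfl fun i hi => ?_
  rw [hk i (Nat.lt_succ_iff.mp (mem_range.mp hi))]

end Composition

lemma coeff_succ_one_sub_X_mul_rescale_exp (a : ℚ) (n : ℕ) :
    coeff (n + 1) ((1 - X) * rescale a (exp ℚ)) = a ^ n * (a - (n + 1)) / (n + 1).factorial := by
  rw [sub_mul, one_mul, map_sub, coeff_succ_X_mul, coeff_rescale, coeff_rescale, coeff_exp,
    coeff_exp, Nat.factorial_succ]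
  simp only [eq_ratCast, Rat.cast_div, Rat.cast_one, Rat.cast_natCast]
  push_cast
  field_simp
  ring

lemma constantCoeff_treeFun : constantCoeff treeFun = 0 := by
  simp [← coeff_zero_eq_constantCoeff_apply, treeFun]

lemma coeff_succ_treeFun (p : ℕ) :
    coeff (p + 1) treeFun = ((p : ℚ) + 1) ^ p / (p + 1).factorial := by
  simp [treeFun]

-- For `i ≥ 1` this is the classical `[z^k] T^i = i k^(k-i-1) / (k-i)!`.
def TreeFunPowCoeffFormula (k : ℕ) : Prop :=
  ∀ i ≤ k, coeff k (treeFun ^ i) = coeff (k - i) ((1 - X) * rescale (k : ℚ) (exp ℚ))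

lemma TreeFunPowCoeffFormula.coeff_psComp_rescale_exp {m : ℕ} (hm : TreeFunPowCoeffFormula m)
    (a : ℚ) :
    coeff m (psComp (rescale a (exp ℚ)) treeFun) = coeff m ((1 - X) * rescale (a + m) (exp ℚ)) := by
  rw [coeff_psComp_eq_coeff_mul hm, ← exp_mul_exp_eq_exp_add, mul_left_comm]

lemma TreeFunPowCoeffFormula.coeff_succ_treeFun_eq_coeff_X_mul {p : ℕ}
    (hp : TreeFunPowCoeffFormula p) :
    coeff (p + 1) treeFun = coeff (p + 1) (X * psComp (exp ℚ) treeFun) := by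
  have hE := hp.coeff_psComp_rescale_exp 1
  rw [rescale_one, RingHom.id_apply] at hE
  rw [coeff_succ_X_mul, hE, coeff_succ_treeFun]
  rcases p with _ | q
  · simp
  · rw [coeff_succ_one_sub_X_mul_rescale_exp, Nat.factorial_succ (q + 1)]
    push_cast
    field_simp
    ring

lemma X_pow_succ_dvd_treeFun_sub {k : ℕ} (ih : ∀ m < k, TreeFunPowCoeffFormula m) :
    X ^ (k + 1) ∣ treeFun - X * psComp (exp ℚ) treeFun := by
  rw [X_pow_dvd_iff]
  rintro (_ | p) hp
  · simp [constantCoeff_treeFun]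
  · rw [map_sub, (ih p (by omega)).coeff_succ_treeFun_eq_coeff_X_mul, sub_self]

lemma treeFunPowCoeffFormula_of_forall_lt {k : ℕ} (ih : ∀ m < k, TreeFunPowCoeffFormula m) :
    TreeFunPowCoeffFormula k := by
  rintro (_ | i) hi
  · rcases k with _ | p
    · simp
    · rw [pow_zero, coeff_one, if_neg p.succ_ne_zero, Nat.sub_zero,
        coeff_succ_one_sub_X_mul_rescale_exp]
      push_cast
      ring
  · obtain ⟨m, rfl⟩ := Nat.exists_eq_add_of_le hi
    rw [coeff_pow_eq_of_X_pow_succ_dvd_sub (X_pow_succ_dvd_treeFun_sub ih), mul_pow,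
      psComp_exp_pow constantCoeff_treeFun, coeff_X_pow_mul', if_pos hi,
      (ih _ (by omega)).coeff_psComp_rescale_exp, Nat.add_sub_cancel_left, ← Nat.cast_add]

lemma treeFunPowCoeffFormula (k : ℕ) : TreeFunPowCoeffFormula k :=
  Nat.strong_induction_on k fun _ ih => treeFunPowCoeffFormula_of_forall_lt ih

/-- for every nonnegative integer `k` and every formal power series `f`,
`[z^k] f(T(z)) = [z^k] f(z)(1-z)e^{kz}`. -/
theorem coeff_comp_treeFun (k : ℕ) (f : PowerSeries ℚ) :
    PowerSeries.coeff k (psComp f treeFun) =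
      PowerSeries.coeff k (f * (1 - PowerSeries.X) * PowerSeries.rescale (k : ℚ) (PowerSeries.exp ℚ)) := by
  rw [mul_assoc]
  exact coeff_psComp_eq_coeff_mul (treeFunPowCoeffFormula k) f
end

section
/- The partial permutohedron P(2,n), which equals the convex hull of the points (0,0), (n,0), (0,n), (n,n-1), (n-1,n) in R^2, has Ehrhart polynomial ehr(t) = (n^2 - 1/2)t^2 + (2n - 1/2)t + 1 for every positive integer n ≥ 1. -/
/-!
The dilate `t • P(2,n)` is the square `[0, tn]²` with the corner `x + y > 2tn - t` cut off.
Reflecting that corner through `(tn, tn)` turns it into the triangle `x + y < t`, which has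
`(t + 1).choose 2` lattice points, so `t • P(2,n)` has `(tn + 1)² - t(t + 1)/2` of them.
-/

open Pointwise

noncomputable def partialPermutohedron2 (n : ℕ) : Set (Fin 2 → ℝ) :=
  convexHull ℝ {![0, 0], ![(n : ℝ), 0], ![0, (n : ℝ)],
    ![(n : ℝ), (n : ℝ) - 1], ![(n : ℝ) - 1, (n : ℝ)]}

open Finset

lemma vec2_mem_segment {x₀ x₁ y₀ y₁ p₀ p₁ θ : ℝ} (h₀ : 0 ≤ θ) (h₁ : θ ≤ 1)
    (hp₀ : p₀ = (1 - θ) * x₀ + θ * y₀) (hp₁ : p₁ = (1 - θ) * x₁ + θ * y₁) :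
    ![p₀, p₁] ∈ segment ℝ ![x₀, x₁] ![y₀, y₁] :=
  ⟨1 - θ, θ, by linarith, h₀, by ring, by simp [hp₀, hp₁]⟩

lemma pentagon_subset_of_convex {a b : ℝ} {K : Set (Fin 2 → ℝ)} (hK : Convex ℝ K)
    (hO : ![0, 0] ∈ K) (hA : ![a, 0] ∈ K) (hB : ![0, a] ∈ K) (hC : ![a, a - b] ∈ K)
    (hD : ![a - b, a] ∈ K) :
    {p : Fin 2 → ℝ | 0 ≤ p 0 ∧ p 0 ≤ a ∧ 0 ≤ p 1 ∧ p 1 ≤ a ∧ p 0 + p 1 + b ≤ 2 * a} ⊆ K := by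
  rintro p ⟨h₀, h₀', h₁, h₁', hs⟩
  rw [show p = ![p 0, p 1] by ext i; fin_cases i <;> rfl]
  set s := p 0 + p 1
  -- `p` lies on the chord `x + y = s`, whose endpoints lie on edges of the pentagon
  rcases le_or_gt s a with hsa | hsa
  · have hθ : s / a * a = s := div_mul_cancel_of_imp fun h => by linarith
    have hθ₀ : 0 ≤ s / a := div_nonneg (by linarith) (by linarith)
    have hθ₁ : s / a ≤ 1 := div_le_one_of_le₀ hsa (by linarith)
    have hu : ![s, 0] ∈ K := hK.segment_subset hO hA
      (vec2_mem_segment hθ₀ hθ₁ (by linarith) (by ring))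
    have hw : ![0, s] ∈ K := hK.segment_subset hO hB
      (vec2_mem_segment hθ₀ hθ₁ (by ring) (by linarith))
    have hφ : p 1 / s * s = p 1 := div_mul_cancel_of_imp fun h => by linarith
    exact hK.segment_subset hu hw (vec2_mem_segment (θ := p 1 / s) (div_nonneg h₁ (by linarith))
      (div_le_one_of_le₀ (by linarith) (by linarith)) (by linarith) (by linarith))
  · have hθ : (s - a) / (a - b) * (a - b) = s - a := div_mul_cancel_of_imp fun h => by linarith
    have hθ₀ : 0 ≤ (s - a) / (a - b) := div_nonneg (by linarith) (by linarith)
    have hθ₁ : (s - a) / (a - b) ≤ 1 := div_le_one_of_le₀ (by linarith) (by linarith)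
    have hu : ![a, s - a] ∈ K := hK.segment_subset hA hC
      (vec2_mem_segment hθ₀ hθ₁ (by ring) (by linarith))
    have hw : ![s - a, a] ∈ K := hK.segment_subset hB hD
      (vec2_mem_segment hθ₀ hθ₁ (by linarith) (by ring))
    have hφ : (a - p 0) / (2 * a - s) * (2 * a - s) = a - p 0 :=
      div_mul_cancel_of_imp fun h => by linarith
    exact hK.segment_subset hu hw (vec2_mem_segment (θ := (a - p 0) / (2 * a - s))
      (div_nonneg (by linarith) (by linarith)) (div_le_one_of_le₀ (by linarith) (by linarith))
      (by linarith) (by linarith))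

theorem convexHull_pentagon {a b : ℝ} (hb : 0 ≤ b) (hba : b ≤ a) :
    convexHull ℝ {![0, 0], ![a, 0], ![0, a], ![a, a - b], ![a - b, a]} =
      {p : Fin 2 → ℝ | 0 ≤ p 0 ∧ p 0 ≤ a ∧ 0 ≤ p 1 ∧ p 1 ≤ a ∧ p 0 + p 1 + b ≤ 2 * a} := by
  refine (convexHull_min ?_ ?_).antisymm ?_
  · rintro p (rfl | rfl | rfl | rfl | rfl) <;>
      simp only [Set.mem_ofPred_eq, Matrix.cons_val_zero, Matrix.cons_val_one] <;>
      refine ⟨?_, ?_, ?_, ?_, ?_⟩ <;> linarith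
  · rintro x ⟨hx₀, hx₀', hx₁, hx₁', hx⟩ y ⟨hy₀, hy₀', hy₁, hy₁', hy⟩ α β hα hβ hαβ
    simp only [Set.mem_ofPred_eq, Pi.add_apply, Pi.smul_apply, smul_eq_mul]
    refine ⟨?_, ?_, ?_, ?_, ?_⟩ <;> nlinarith
  · exact pentagon_subset_of_convex (convex_convexHull ℝ _) (subset_convexHull ℝ _ (by simp))
      (subset_convexHull ℝ _ (by simp)) (subset_convexHull ℝ _ (by simp))
      (subset_convexHull ℝ _ (by simp)) (subset_convexHull ℝ _ (by simp))

theorem smul_partialPermutohedron2 {n : ℕ} (hn : 1 ≤ n) {c : ℝ} (hc : 0 ≤ c) :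
    c • partialPermutohedron2 n = {p : Fin 2 → ℝ | 0 ≤ p 0 ∧ p 0 ≤ c * n ∧ 0 ≤ p 1 ∧
      p 1 ≤ c * n ∧ p 0 + p 1 + c ≤ 2 * (c * n)} := by
  have hcn : c ≤ c * n := le_mul_of_one_le_right hc (by exact_mod_cast hn)
  rw [partialPermutohedron2, ← convexHull_smul, ← convexHull_pentagon hc hcn]
  simp only [Set.smul_set_insert, Set.smul_set_singleton, Matrix.smul_cons, Matrix.smul_empty,
    smul_eq_mul, mul_zero, mul_sub, mul_one]

def latticePentagon (N t : ℕ) : Finset (ℕ × ℕ) :=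
  (range (N + 1) ×ˢ range (N + 1)).filter fun p => p.1 + p.2 + t ≤ 2 * N

def latticeTriangle (t : ℕ) : Finset (ℕ × ℕ) :=
  (range t ×ˢ range t).filter fun p => p.1 + p.2 < t

theorem card_latticeTriangle (t : ℕ) : #(latticeTriangle t) = (t + 1).choose 2 := by
  induction t with
  | zero => rfl
  | succ t ih =>
    have hsplit : latticeTriangle (t + 1) = latticeTriangle t ∪ antidiagonal t := by
      ext ⟨i, j⟩
      simp only [latticeTriangle, mem_union, mem_filter, mem_product, mem_range,
        HasAntidiagonal.mem_antidiagonal]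
      omega
    have hdisj : Disjoint (latticeTriangle t) (antidiagonal t) := by
      rw [disjoint_left]
      rintro ⟨i, j⟩ h
      simp only [latticeTriangle, mem_filter, HasAntidiagonal.mem_antidiagonal] at h ⊢
      omega
    rw [hsplit, card_union_of_disjoint hdisj, ih, Finset.Nat.card_antidiagonal,
      Nat.choose_succ_succ' (t + 1) 1, Nat.choose_one_right, add_comm]

theorem card_latticePentagon_add_card_latticeTriangle {N t : ℕ} (ht : t ≤ N + 1) :
    #(latticePentagon N t) + #(latticeTriangle t) = (N + 1) ^ 2 := by
  have hcorner : #((range (N + 1) ×ˢ range (N + 1)).filter fun p => ¬p.1 + p.2 + t ≤ 2 * N) =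
      #(latticeTriangle t) := by
    refine card_nbij' (fun p => (N - p.1, N - p.2)) (fun p => (N - p.1, N - p.2)) ?_ ?_ ?_ ?_ <;>
      rintro ⟨i, j⟩ h <;>
      simp only [latticeTriangle, coe_filter, mem_product, mem_range, Set.mem_ofPred_eq,
        Prod.mk.injEq] at h ⊢ <;>
      omega
  rw [latticePentagon, ← hcorner, card_filter_add_card_filter_not, card_product,
    card_range, sq]

theorem natCard_lattice_smul_partialPermutohedron2 {n : ℕ} (hn : 1 ≤ n) (t : ℕ) :
    Nat.card {x : Fin 2 → ℤ | (fun i => (x i : ℝ)) ∈ (t : ℝ) • partialPermutohedron2 n} =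
      #(latticePentagon (t * n) t) := by
  have hinj : Function.Injective fun p : ℕ × ℕ => ![(p.1 : ℤ), p.2] := by
    intro p q h
    simpa [Prod.ext_iff] using h
  suffices hset : {x : Fin 2 → ℤ | (fun i => (x i : ℝ)) ∈ (t : ℝ) • partialPermutohedron2 n} =
      (latticePentagon (t * n) t).image fun p => ![(p.1 : ℤ), p.2] by
    rw [hset, Nat.card_coe_set_eq, Set.ncard_coe_finset, card_image_of_injective _ hinj]
  ext x
  rw [smul_partialPermutohedron2 hn t.cast_nonneg]
  simp only [Set.mem_ofPred_eq, coe_image, Set.mem_image, mem_coe, latticePentagon, mem_filter,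
    mem_product, mem_range]
  norm_cast
  constructor
  · rintro ⟨h₀, h₀', h₁, h₁', hs⟩
    refine ⟨((x 0).toNat, (x 1).toNat), by omega, ?_⟩
    ext i; fin_cases i <;> simp [h₀, h₁]
  · rintro ⟨⟨i, j⟩, hij, rfl⟩
    simp only [Matrix.cons_val_zero, Matrix.cons_val_one, Matrix.cons_val_fin_one]
    omega

/-- for every positive integer `n`, the Ehrhart polynomial of `P(2,n)` is
`(n² - 1/2)t² + (2n - 1/2)t + 1`, i.e. the number of lattice points in the dilate
`t·P(2,n)` equals this for every nonnegative integer `t`. -/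
theorem ehrhart_partialPermutohedron2 (n : ℕ) (hn : 1 ≤ n) (t : ℕ) :
    (Nat.card {x : Fin 2 → ℤ |
        (fun i => (x i : ℝ)) ∈ (t : ℝ) • partialPermutohedron2 n} : ℚ) =
      ((n : ℚ) ^ 2 - 1/2) * t ^ 2 + (2 * n - 1/2) * t + 1 := by
  have hcount := card_latticePentagon_add_card_latticeTriangle (N := t * n) (t := t)
    (by nlinarith)
  rw [card_latticeTriangle] at hcount
  have hcount' := congrArg (Nat.cast : ℕ → ℚ) hcount
  push_cast [Nat.cast_choose_two] at hcount'
  rw [natCard_lattice_smul_partialPermutohedron2 hn]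
  linear_combination hcount'
end

section
/- For positive integers m and n, the partial permutohedron P(m,n) has exactly sum_{i=0}^{min(m,n)} m!/(m-i)! vertices, namely the vectors in R^m with zeros in some m-i positions and with the other i entries being n, n-1, ..., n-i+1 in some order, for i = 0,...,min(m,n). -/
/-!
An extreme point of a convex hull is one of the generators, here a vector `y` with entries in
`{0, …, n}` and distinct nonzero entries. If the nonzero values of `y` are not
`n, n - 1, …, n - k + 1` for some `k`, then some value `v < n` occurs while `v + 1` does not; shifting all entries in
`[1, v]` up, respectively down, by one gives two generators with midpoint `y`.

Conversely, the vector `x` with `x (f j) = n - j` and zeros off the range of `f` is the unique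
maximizer over the generators of the linear functional with weight `k - j` on `f j` and `-1`
elsewhere, because every partial sum `∑_{j ≤ t} y (f j)` is at most `n + (n - 1) + ⋯ + (n - t)`.
Counting the pairs `(k, f)` gives the number of vertices.
-/

open Pointwise

/-- The partial permutohedron `P(m,n) ⊆ ℝ^m`: the convex hull of all vectors in
`{0,1,…,n}^m` whose nonzero entries are pairwise distinct. -/
noncomputable def partialPermutohedron (m n : ℕ) : Set (Fin m → ℝ) :=
  convexHull ℝ {x : Fin m → ℝ | ∃ y : Fin m → ℕ,
    (∀ i, y i ≤ n) ∧
    (∀ i j, i ≠ j → y i ≠ 0 → y j ≠ 0 → y i ≠ y j) ∧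
    x = fun i => (y i : ℝ)}

open Finset

theorem mem_extremePoints_convexHull_of_forall_lt {E : Type*} [AddCommGroup E] [Module ℝ E]
    {s : Set E} {x : E} (l : E →ₗ[ℝ] ℝ) (hx : x ∈ s) (hlt : ∀ y ∈ s, y ≠ x → l y < l x) :
    x ∈ (convexHull ℝ s).extremePoints ℝ := by
  have hlt_hull : ∀ p ∈ convexHull ℝ s, p ≠ x → l p < l x := by
    intro p hp hpx
    rcases (s \ {x}).eq_empty_or_nonempty with hempty | hne
    · rw [Set.sdiff_eq_empty] at hempty
      have := convexHull_mono hempty hp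
      rw [convexHull_singleton] at this
      exact absurd this hpx
    -- `p` lies on a segment from `x` to a point `q` of `convexHull (s \ {x})`, where `l < l x`.
    rw [← Set.insert_eq_of_mem hx, ← Set.insert_sdiff_singleton, convexHull_insert hne,
      convexJoin_singleton_left] at hp
    obtain ⟨q, hq, a, b, ha, hb, hab, rfl⟩ := Set.mem_iUnion₂.1 hp
    have hlq : l q < l x := convexHull_min (fun y hy => hlt y hy.1 hy.2)
      (convex_halfSpace_lt l.isLinear _) hq
    have hb0 : 0 < b := by
      refine lt_of_le_of_ne hb ?_
      rintro rfl
      rw [add_zero] at hab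
      simp [hab] at hpx
    simp only [map_add, map_smul, smul_eq_mul]
    calc a * l x + b * l q < a * l x + b * l x := by gcongr
      _ = l x := by rw [← add_mul, hab, one_mul]
  rw [(convex_convexHull ℝ s).mem_extremePoints_iff_convex_sdiff]
  refine ⟨subset_convexHull ℝ s hx, ?_⟩
  have : convexHull ℝ s \ {x} = convexHull ℝ s ∩ {p | l p < l x} := by
    ext p
    refine ⟨fun hp => ⟨hp.1, hlt_hull p hp.1 hp.2⟩, fun hp => ⟨hp.1, ?_⟩⟩
    rintro rfl
    exact lt_irrefl (l p) hp.2
  rw [this]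
  exact (convex_convexHull ℝ s).inter (convex_halfSpace_lt l.isLinear _)

theorem Finset.sum_le_sum_range_sub {s : Finset ℕ} {n : ℕ} (hs : ∀ v ∈ s, v ≤ n) :
    ∑ v ∈ s, v ≤ ∑ i ∈ range #s, (n - i) := by
  induction n generalizing s with
  | zero => simp [sum_eq_zero fun v hv => Nat.le_zero.1 (hs v hv)]
  | succ n ih =>
    by_cases htop : n + 1 ∈ s
    · have hrest : ∀ v ∈ s.erase (n + 1), v ≤ n := fun v hv => by
        have := hs v (mem_of_mem_erase hv)
        have := ne_of_mem_erase hv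
        omega
      rw [← add_sum_erase s _ htop, ← card_erase_add_one htop, sum_range_succ']
      simp only [Nat.add_sub_add_right]
      have := ih hrest
      omega
    · have hrest : ∀ v ∈ s, v ≤ n := fun v hv => by
        have := hs v hv
        have : v ≠ n + 1 := fun h => htop (h ▸ hv)
        omega
      exact (ih hrest).trans (sum_le_sum fun i _ => by omega)

theorem Finset.eq_Ioc_of_forall_succ_mem {T : Finset ℕ} {n : ℕ} (hT : T ⊆ Icc 1 n)
    (hsucc : ∀ v ∈ T, v < n → v + 1 ∈ T) : T = Ioc (n - #T) n := by
  have hup : ∀ v ∈ T, Icc v n ⊆ T := by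
    intro v hv u hu
    obtain ⟨hvu, hun⟩ := mem_Icc.1 hu
    clear hu
    induction u, hvu using Nat.le_induction with
    | base => exact hv
    | succ u hvu ih => exact hsucc u (ih (by omega)) (by omega)
  refine eq_of_subset_of_card_le (fun v hv => ?_) ?_
  · have hcard := card_le_card (hup v hv)
    have := mem_Icc.1 (hT hv)
    rw [Nat.card_Icc] at hcard
    exact mem_Ioc.2 ⟨by omega, by omega⟩
  · rw [Nat.card_Ioc]
    omega

theorem eq_of_forall_sum_Iic_eq {α M : Type*} [PartialOrder α] [LocallyFiniteOrderBot α]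
    [WellFoundedLT α] [AddCancelCommMonoid M] {a b : α → M}
    (h : ∀ t, ∑ j ∈ Iic t, a j = ∑ j ∈ Iic t, b j) : a = b := by
  funext t
  induction t using WellFoundedLT.induction with
  | _ t ih =>
    have := h t
    rw [Iic_eq_cons_Iio, sum_cons, sum_cons, sum_congr rfl fun j hj => ih j (mem_Iio.1 hj)] at this
    exact add_right_cancel this

def IsPartialPerm {ι : Type*} (n : ℕ) (y : ι → ℕ) : Prop :=
  (∀ i, y i ≤ n) ∧ ∀ i j, i ≠ j → y i ≠ 0 → y j ≠ 0 → y i ≠ y j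

theorem partialPermutohedron_eq_convexHull (m n : ℕ) :
    partialPermutohedron m n =
      convexHull ℝ ((fun y i => (y i : ℝ)) '' {y : Fin m → ℕ | IsPartialPerm n y}) := by
  rw [partialPermutohedron]
  congr 1
  ext x
  constructor
  · rintro ⟨y, hle, hne, rfl⟩
    exact ⟨y, ⟨hle, hne⟩, rfl⟩
  · rintro ⟨y, ⟨hle, hne⟩, rfl⟩
    exact ⟨y, hle, hne, rfl⟩

namespace IsPartialPerm

variable {ι : Type*} {n : ℕ} {y : ι → ℕ}

theorem natCast_mem_partialPermutohedron {m : ℕ} {y : Fin m → ℕ} (hy : IsPartialPerm n y) :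
    (fun i => (y i : ℝ)) ∈ partialPermutohedron m n := by
  rw [partialPermutohedron_eq_convexHull]
  exact subset_convexHull ℝ _ ⟨y, hy, rfl⟩

theorem sum_le_sum_range_sub (hy : IsPartialPerm n y) (s : Finset ι) :
    ∑ i ∈ s, y i ≤ ∑ i ∈ range #s, (n - i) := by
  classical
  set s' := s.filter (y · ≠ 0)
  have hinj : Set.InjOn y s' := fun i hi j hj hij => by
    by_contra hne
    exact hy.2 i j hne (mem_filter.1 hi).2 (mem_filter.1 hj).2 hij
  calc ∑ i ∈ s, y i = ∑ v ∈ s'.image y, v := by rw [sum_image hinj, sum_filter_ne_zero]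
    _ ≤ ∑ i ∈ range #(s'.image y), (n - i) :=
      Finset.sum_le_sum_range_sub fun v hv => by
        obtain ⟨i, -, rfl⟩ := mem_image.1 hv
        exact hy.1 i
    _ ≤ ∑ i ∈ range #s, (n - i) :=
      sum_le_sum_of_subset (range_subset_range.2 (card_image_le.trans (card_filter_le _ _)))

theorem sum_Iic_le {k : ℕ} (hy : IsPartialPerm n y) (f : Fin k ↪ ι) (t : Fin k) :
    ∑ j ∈ Iic t, y (f j) ≤ ∑ j ∈ Iic t, (n - j) :=
  calc ∑ j ∈ Iic t, y (f j) = ∑ i ∈ (Iic t).map f, y i := (sum_map _ _ _).symm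
    _ ≤ ∑ i ∈ range (t + 1), (n - i) := by
      simpa only [card_map, Fin.card_Iic] using hy.sum_le_sum_range_sub ((Iic t).map f)
    _ = ∑ j ∈ Iic t, (n - j) := by
      rw [Nat.range_succ_eq_Iic, ← Fin.map_valEmbedding_Iic, sum_map]
      rfl

theorem ite_add_one {v : ℕ} (hy : IsPartialPerm n y) (hvn : v < n) (hv : ∀ i, y i ≠ v + 1) :
    IsPartialPerm n fun i => if 0 < y i ∧ y i ≤ v then y i + 1 else y i := by
  refine ⟨fun i => ?_, fun i j hij => ?_⟩
  · have := hy.1 i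
    dsimp only
    split_ifs <;> omega
  · have := hy.2 i j hij
    have := hv i
    have := hv j
    dsimp only
    split_ifs <;> omega

theorem ite_sub_one (hy : IsPartialPerm n y) (v : ℕ) :
    IsPartialPerm n fun i => if 0 < y i ∧ y i ≤ v then y i - 1 else y i := by
  refine ⟨fun i => ?_, fun i j hij => ?_⟩
  · have := hy.1 i
    dsimp only
    split_ifs <;> omega
  · have := hy.2 i j hij
    dsimp only
    split_ifs <;> omega

end IsPartialPerm

section vertexVec

variable {ι : Type*} {n k : ℕ}

noncomputable def vertexVec (n : ℕ) (f : Fin k ↪ ι) : ι → ℕ :=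
  Function.extend f (fun j => n - (j : ℕ)) 0

theorem vertexVec_apply_embedding (f : Fin k ↪ ι) (j : Fin k) : vertexVec n f (f j) = n - j :=
  f.injective.extend_apply _ _ _

theorem vertexVec_apply_of_forall_ne {f : Fin k ↪ ι} {i : ι} (h : ∀ j, f j ≠ i) :
    vertexVec n f i = 0 :=
  Function.extend_apply' _ _ _ (not_exists.2 h)

theorem vertexVec_ne_zero_iff (hk : k ≤ n) {f : Fin k ↪ ι} {i : ι} :
    vertexVec n f i ≠ 0 ↔ ∃ j, f j = i := by
  refine ⟨fun h => not_forall_not.1 fun hf => h (vertexVec_apply_of_forall_ne hf), ?_⟩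
  rintro ⟨j, rfl⟩
  rw [vertexVec_apply_embedding]
  omega

theorem isPartialPerm_vertexVec (hk : k ≤ n) (f : Fin k ↪ ι) : IsPartialPerm n (vertexVec n f) := by
  refine ⟨fun i => ?_, fun i i' hii' hi hi' => ?_⟩
  · by_cases h : ∃ j, f j = i
    · obtain ⟨j, rfl⟩ := h
      rw [vertexVec_apply_embedding]
      omega
    · rw [vertexVec_apply_of_forall_ne (not_exists.1 h)]
      omega
  obtain ⟨j, rfl⟩ := (vertexVec_ne_zero_iff hk).1 hi
  obtain ⟨j', rfl⟩ := (vertexVec_ne_zero_iff hk).1 hi'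
  have : (j : ℕ) ≠ j' := fun h => hii' (congrArg f (Fin.ext h))
  rw [vertexVec_apply_embedding, vertexVec_apply_embedding]
  omega

theorem card_filter_vertexVec_ne_zero [Fintype ι] [DecidableEq ι] (hk : k ≤ n) (f : Fin k ↪ ι) :
    #{i | vertexVec n f i ≠ 0} = k := by
  have : ({i | vertexVec n f i ≠ 0} : Finset ι) = univ.map f := by
    ext i
    simp [vertexVec_ne_zero_iff hk]
  rw [this, card_map, card_univ, Fintype.card_fin]

theorem vertexVec_injective (hk : k ≤ n) :
    Function.Injective (vertexVec n : (Fin k ↪ ι) → ι → ℕ) := by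
  intro f g hfg
  ext j
  obtain ⟨j', hj'⟩ := (vertexVec_ne_zero_iff hk).1
    (hfg ▸ (vertexVec_ne_zero_iff hk).2 ⟨j, rfl⟩ : vertexVec n g (f j) ≠ 0)
  have := congrFun hfg (f j)
  rw [vertexVec_apply_embedding, ← hj', vertexVec_apply_embedding] at this
  rw [← hj', Fin.ext (by omega : (j' : ℕ) = j)]

end vertexVec

theorem IsPartialPerm.exists_eq_vertexVec {ι : Type*} [Fintype ι] [DecidableEq ι] {n : ℕ}
    {y : ι → ℕ} (hy : IsPartialPerm n y)
    (hsucc : ∀ i, y i ≠ 0 → y i < n → ∃ i', y i' = y i + 1) :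
    ∃ k ≤ n, ∃ f : Fin k ↪ ι, y = vertexVec n f := by
  set T := (univ.image y).erase 0
  have hmemT : ∀ v, v ∈ T ↔ v ≠ 0 ∧ ∃ i, y i = v := by simp [T]
  have hT : T ⊆ Icc 1 n := fun v hv => by
    obtain ⟨hv0, i, rfl⟩ := (hmemT v).1 hv
    exact mem_Icc.2 ⟨Nat.one_le_iff_ne_zero.2 hv0, hy.1 i⟩
  have hTsucc : ∀ v ∈ T, v < n → v + 1 ∈ T := fun v hv hvn => by
    obtain ⟨hv0, i, rfl⟩ := (hmemT _).1 hv
    obtain ⟨i', hi'⟩ := hsucc i hv0 hvn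
    exact (hmemT _).2 ⟨by omega, i', hi'⟩
  have hTeq := eq_Ioc_of_forall_succ_mem hT hTsucc
  set k := #T
  have hk : k ≤ n := by simpa using card_le_card hT
  have hval : ∀ j : Fin k, ∃ i, y i = n - j := fun j =>
    ((hmemT _).1 (hTeq ▸ mem_Ioc.2 ⟨by omega, by omega⟩)).2
  choose g hg using hval
  have hg_inj : Function.Injective g := fun j j' h => by
    have := congrArg y h
    rw [hg, hg] at this
    exact Fin.ext (by omega)
  refine ⟨k, hk, ⟨g, hg_inj⟩, funext fun i => ?_⟩
  by_cases hi : ∃ j, g j = i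
  · obtain ⟨j, rfl⟩ := hi
    exact (hg j).trans (vertexVec_apply_embedding ⟨g, hg_inj⟩ j).symm
  rw [not_exists] at hi
  rw [vertexVec_apply_of_forall_ne hi]
  by_contra hyi
  have := hTeq ▸ (hmemT (y i)).2 ⟨hyi, i, rfl⟩
  rw [mem_Ioc] at this
  have hj : n - y i < k := by omega
  have hgj : y (g ⟨n - y i, hj⟩) = y i := by
    rw [hg, Fin.val_mk]
    omega
  exact hy.2 _ i (hi _) (by rwa [hgj]) hyi hgj

section vertexFunctional

variable {ι : Type*} [Fintype ι] [DecidableEq ι] {n k : ℕ}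

/-- Weight `k - j` on coordinate `f j` and `-1` off the range of `f`, written through partial sums
because `vertexVec n f` maximizes each `∑ j ∈ Iic t, y (f j)` separately. -/
noncomputable def vertexFunctional (f : Fin k ↪ ι) : (ι → ℝ) →ₗ[ℝ] ℝ :=
  ∑ t, ∑ j ∈ Iic t, LinearMap.proj (f j) - ∑ i ∈ (univ.map f)ᶜ, LinearMap.proj i

theorem vertexFunctional_natCast (f : Fin k ↪ ι) (y : ι → ℕ) :
    vertexFunctional f (fun i => (y i : ℝ)) =
      ((∑ t, ∑ j ∈ Iic t, y (f j) : ℕ) : ℝ) - ((∑ i ∈ (univ.map f)ᶜ, y i : ℕ) : ℝ) := by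
  simp [vertexFunctional]

theorem vertexFunctional_lt {y : ι → ℕ} (hy : IsPartialPerm n y) (f : Fin k ↪ ι)
    (hne : y ≠ vertexVec n f) :
    vertexFunctional f (fun i => (y i : ℝ)) <
      vertexFunctional f (fun i => (vertexVec n f i : ℝ)) := by
  have hle : ∀ t ∈ univ, ∑ j ∈ Iic t, y (f j) ≤ ∑ j ∈ Iic t, vertexVec n f (f j) := fun t _ => by
    simpa only [vertexVec_apply_embedding] using hy.sum_Iic_le f t
  have hoff : ∑ i ∈ (univ.map f)ᶜ, vertexVec n f i = 0 :=
    sum_eq_zero fun i hi => vertexVec_apply_of_forall_ne (by simpa using hi)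
  set A := ∑ t, ∑ j ∈ Iic t, y (f j)
  set B := ∑ t, ∑ j ∈ Iic t, vertexVec n f (f j)
  set C := ∑ i ∈ (univ.map f)ᶜ, y i
  have hAB : A ≤ B := sum_le_sum hle
  suffices A = B → C = 0 → y = vertexVec n f by
    rw [vertexFunctional_natCast, vertexFunctional_natCast, hoff, Nat.cast_zero, sub_zero]
    have hAB' : (A : ℝ) ≤ B := by exact_mod_cast hAB
    have hC : (0 : ℝ) ≤ C := Nat.cast_nonneg _
    refine lt_of_le_of_ne (by linarith) fun h => hne (this ?_ ?_)
    · exact_mod_cast (by linarith : (A : ℝ) = B)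
    · exact_mod_cast (by linarith : (C : ℝ) = 0)
  intro hsum hC
  have hrange : y ∘ f = vertexVec n f ∘ f :=
    eq_of_forall_sum_Iic_eq fun t => (sum_eq_sum_iff_of_le hle).1 hsum t (mem_univ t)
  funext i
  by_cases hi : ∃ j, f j = i
  · obtain ⟨j, rfl⟩ := hi
    exact congrFun hrange j
  rw [not_exists] at hi
  rw [vertexVec_apply_of_forall_ne hi]
  exact sum_eq_zero_iff.1 hC i (by simpa using hi)

end vertexFunctional

theorem vertexVec_mem_extremePoints {m n k : ℕ} (hk : k ≤ n) (f : Fin k ↪ Fin m) :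
    (fun i => (vertexVec n f i : ℝ)) ∈ (partialPermutohedron m n).extremePoints ℝ := by
  rw [partialPermutohedron_eq_convexHull]
  refine mem_extremePoints_convexHull_of_forall_lt (vertexFunctional f)
    ⟨_, isPartialPerm_vertexVec hk f, rfl⟩ ?_
  rintro _ ⟨y, hy, rfl⟩ hne
  exact vertexFunctional_lt hy f fun h => hne (h ▸ rfl)

theorem natCast_mem_openSegment {ι : Type*} {y y₁ y₂ : ι → ℕ} (h : ∀ i, y₁ i + y₂ i = 2 * y i) :
    (fun i => (y i : ℝ)) ∈ openSegment ℝ (fun i => (y₁ i : ℝ)) (fun i => (y₂ i : ℝ)) := by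
  refine ⟨1 / 2, 1 / 2, by norm_num, by norm_num, by norm_num, funext fun i => ?_⟩
  have : (y₁ i : ℝ) + y₂ i = 2 * y i := by exact_mod_cast h i
  simp only [Pi.add_apply, Pi.smul_apply, smul_eq_mul]
  linarith

theorem IsPartialPerm.exists_succ_of_mem_extremePoints {m n : ℕ} {y : Fin m → ℕ}
    (hy : IsPartialPerm n y)
    (hext : (fun i => (y i : ℝ)) ∈ (partialPermutohedron m n).extremePoints ℝ)
    (i : Fin m) (hi : y i ≠ 0) (hin : y i < n) : ∃ i', y i' = y i + 1 := by
  by_contra! hv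
  have hseg := natCast_mem_openSegment (y := y) fun i' => by
    show (if 0 < y i' ∧ y i' ≤ y i then y i' + 1 else y i') +
      (if 0 < y i' ∧ y i' ≤ y i then y i' - 1 else y i') = 2 * y i'
    split_ifs <;> omega
  have := congrFun ((mem_extremePoints.1 hext).2 _
    (hy.ite_add_one hin hv).natCast_mem_partialPermutohedron _
    (hy.ite_sub_one (y i)).natCast_mem_partialPermutohedron hseg).1 i
  simp [Nat.pos_of_ne_zero hi] at this

noncomputable def vertexFamily (m n : ℕ) (p : Σ k : Fin (min m n + 1), Fin k ↪ Fin m) :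
    Fin m → ℝ :=
  fun i => (vertexVec n p.2 i : ℝ)

theorem Fin.val_le_right_of_min_add_one {m n : ℕ} (k : Fin (min m n + 1)) : (k : ℕ) ≤ n :=
  (Nat.le_of_lt_succ k.2).trans (min_le_right m n)

theorem extremePoints_partialPermutohedron (m n : ℕ) :
    (partialPermutohedron m n).extremePoints ℝ = Set.range (vertexFamily m n) := by
  ext x
  constructor
  · intro hx
    obtain ⟨y, hy, rfl⟩ :=
      extremePoints_convexHull_subset (partialPermutohedron_eq_convexHull m n ▸ hx)
    obtain ⟨k, hkn, f, rfl⟩ := hy.exists_eq_vertexVec (hy.exists_succ_of_mem_extremePoints hx)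
    have hkm : k ≤ m := by simpa using Fintype.card_le_of_embedding f
    exact ⟨⟨⟨k, Nat.lt_succ_of_le (le_min hkm hkn)⟩, f⟩, rfl⟩
  · rintro ⟨⟨k, f⟩, rfl⟩
    exact vertexVec_mem_extremePoints (Fin.val_le_right_of_min_add_one k) f

theorem vertexFamily_injective (m n : ℕ) : Function.Injective (vertexFamily m n) := by
  rintro ⟨k, f⟩ ⟨k', g⟩ h
  have hfg : vertexVec n f = vertexVec n g := funext fun i =>
    Nat.cast_injective (R := ℝ) (congrFun h i)
  obtain rfl : k = k' := Fin.ext <| by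
    rw [← card_filter_vertexVec_ne_zero (Fin.val_le_right_of_min_add_one k) f, hfg,
      card_filter_vertexVec_ne_zero (Fin.val_le_right_of_min_add_one k') g]
  rw [vertexVec_injective (Fin.val_le_right_of_min_add_one k) hfg]

theorem range_vertexFamily (m n : ℕ) :
    Set.range (vertexFamily m n) =
      {x : Fin m → ℝ | ∃ (k : ℕ) (_ : k ≤ min m n) (f : Fin k ↪ Fin m),
        (∀ j : Fin k, x (f j) = (n : ℝ) - (j : ℕ)) ∧
        ∀ i : Fin m, (∀ j, f j ≠ i) → x i = 0} := by
  have happly {k : ℕ} (hk : k ≤ n) (f : Fin k ↪ Fin m) (j : Fin k) :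
      (vertexVec n f (f j) : ℝ) = n - j := by
    rw [vertexVec_apply_embedding, Nat.cast_sub (by omega)]
  ext x
  constructor
  · rintro ⟨⟨k, f⟩, rfl⟩
    exact ⟨k, Nat.le_of_lt_succ k.2, f, happly (Fin.val_le_right_of_min_add_one k) f,
      fun i hi => by simp [vertexFamily, vertexVec_apply_of_forall_ne hi]⟩
  · rintro ⟨k, hk, f, hf, hz⟩
    refine ⟨⟨⟨k, Nat.lt_succ_of_le hk⟩, f⟩, funext fun i => ?_⟩
    by_cases hi : ∃ j, f j = i
    · obtain ⟨j, rfl⟩ := hi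
      rw [hf j]
      exact happly (hk.trans (min_le_right m n)) f j
    · rw [not_exists] at hi
      simp [vertexFamily, vertexVec_apply_of_forall_ne hi, hz i hi]

open Nat in
theorem Fintype.card_sigma_fin_embedding {m N : ℕ} (hN : N ≤ m) :
    Fintype.card (Σ k : Fin (N + 1), Fin k ↪ Fin m) = ∑ i ∈ range (N + 1), m ! / (m - i)! := by
  rw [Fintype.card_sigma, ← Fin.sum_univ_eq_sum_range]
  refine Finset.sum_congr rfl fun k _ => ?_
  rw [Fintype.card_embedding_eq, Fintype.card_fin, Fintype.card_fin,
    Nat.descFactorial_eq_div (by omega)]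

theorem vertices_partialPermutohedron_general (m n : ℕ) :
    Set.extremePoints ℝ (partialPermutohedron m n) =
      {x : Fin m → ℝ | ∃ (k : ℕ) (_ : k ≤ min m n) (f : Fin k ↪ Fin m),
        (∀ j : Fin k, x (f j) = (n : ℝ) - (j : ℕ)) ∧
        ∀ i : Fin m, (∀ j, f j ≠ i) → x i = 0} ∧
    Nat.card (Set.extremePoints ℝ (partialPermutohedron m n)) =
      ∑ i ∈ Finset.range (min m n + 1), m.factorial / (m - i).factorial := by
  rw [extremePoints_partialPermutohedron, ← range_vertexFamily]
  refine ⟨rfl, ?_⟩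
  rw [Nat.card_range_of_injective (vertexFamily_injective m n), Nat.card_eq_fintype_card,
    Fintype.card_sigma_fin_embedding (min_le_left m n)]

/-- the vertices (extreme points) of `P(m,n)` are exactly the vectors with
zeros in some `m-k` positions and entries `n, n-1, …, n-k+1` (in some order) in the
remaining `k` positions, for `0 ≤ k ≤ min(m,n)`; in particular there are exactly
`∑_{i=0}^{min(m,n)} m!/(m-i)!` of them. -/
theorem vertices_partialPermutohedron (m n : ℕ) (hm : 1 ≤ m) (hn : 1 ≤ n) :
    Set.extremePoints ℝ (partialPermutohedron m n) =
      {x : Fin m → ℝ | ∃ (k : ℕ) (_ : k ≤ min m n) (f : Fin k ↪ Fin m),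
        (∀ j : Fin k, x (f j) = (n : ℝ) - (j : ℕ)) ∧
        ∀ i : Fin m, (∀ j, f j ≠ i) → x i = 0} ∧
    Nat.card (Set.extremePoints ℝ (partialPermutohedron m n)) =
      ∑ i ∈ Finset.range (min m n + 1), m.factorial / (m - i).factorial :=
  vertices_partialPermutohedron_general m n
end

section
/- For positive integers m and n with n ≥ m-1, the partial permutohedron P(m,n) equals the Minkowski sum (n-m+1)·sum_{i=1}^m conv{0, e_i} + sum_{1≤i<j≤m} conv{0, e_i, e_j}, where e_i are the standard unit vectors in R^m. -/
open Pointwise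

/-!
Write `c = n + 1 - m`. A vertex `y` of `P(m,n)` splits as `min(y, c) + (y - c)`: the first part
lies in the cube `[0,c]^m`, and the second has entries below `m`, its nonzero ones distinct, so
after sorting its entries it is the out-degree vector of a partial orientation of the complete graph, i.e. a sum
of one vertex of each triangle `{0, e_i, e_j}`.

Conversely, the right-hand side is the convex hull of the Minkowski sum of the vertex sets of its
summands. The points of that sum are integer vectors `z` satisfying `z(S) ≤ n + (n-1) + ⋯`
(`|S|` terms) for every `S`. Any integer `z` with these bounds lies in `P(m,n)`: if two nonzero
entries of `z` are equal, then `z ± (e_i - e_j)` still satisfy the bounds (no set separating `i`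
from `j` is tight), so `z` is their midpoint, and induction on `∑ z_k²` finishes the argument.
-/

open Finset

namespace PartialPermutohedron

variable {ι : Type*}

def vertices (ι : Type*) (n : ℕ) : Set (ι → ℝ) :=
  {x | ∃ y : ι → ℕ, (∀ i, y i ≤ n) ∧ (∀ i j, i ≠ j → y i ≠ 0 → y j ≠ 0 → y i ≠ y j) ∧
    x = fun i => (y i : ℝ)}

theorem partialPermutohedron_eq (m n : ℕ) :
    partialPermutohedron m n = convexHull ℝ (vertices (Fin m) n) := rfl

/-- The sum of the `s` largest elements of `{0, …, n}`. -/
def topSum (n s : ℕ) : ℕ := ∑ k ∈ range s, (n - k)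

/-- The lattice points of the polymatroid of `f`. -/
def natPolymatroid (f : Finset ι → ℕ) : Set (ι → ℝ) :=
  {x | ∃ z : ι → ℕ, (∀ S, ∑ i ∈ S, z i ≤ f S) ∧ x = fun i => (z i : ℝ)}

section Polymatroid

variable {f g : Finset ι → ℕ}

theorem natPolymatroid_mono (h : ∀ S, f S ≤ g S) : natPolymatroid f ⊆ natPolymatroid g := by
  rintro _ ⟨z, hz, rfl⟩
  exact ⟨z, fun S => (hz S).trans (h S), rfl⟩

theorem zero_mem_natPolymatroid : (0 : ι → ℝ) ∈ natPolymatroid f :=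
  ⟨0, fun S => by simp, by ext; simp⟩

theorem single_mem_natPolymatroid [DecidableEq ι] {a : ι} (h : ∀ S, a ∈ S → 1 ≤ f S) :
    Pi.single a 1 ∈ natPolymatroid f := by
  refine ⟨Pi.single a 1, fun S => ?_, by ext i; simp [Pi.single_apply]⟩
  rw [sum_pi_single']
  split_ifs with ha
  exacts [h S ha, Nat.zero_le _]

theorem pair_subset_natPolymatroid [DecidableEq ι] (a : ι) :
    ({0, Pi.single a 1} : Set (ι → ℝ)) ⊆ natPolymatroid fun S => if a ∈ S then 1 else 0 :=
  Set.insert_subset_iff.2 ⟨zero_mem_natPolymatroid, Set.singleton_subset_iff.2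
    (single_mem_natPolymatroid fun S h => by simp [h])⟩

theorem triangle_subset_natPolymatroid [DecidableEq ι] (a b : ι) :
    ({0, Pi.single a 1, Pi.single b 1} : Set (ι → ℝ)) ⊆
      natPolymatroid fun S => if a ∈ S ∨ b ∈ S then 1 else 0 :=
  Set.insert_subset_iff.2 ⟨zero_mem_natPolymatroid, Set.insert_subset_iff.2
    ⟨single_mem_natPolymatroid fun S h => by simp [h], Set.singleton_subset_iff.2
      (single_mem_natPolymatroid fun S h => by simp [h])⟩⟩

theorem add_subset_natPolymatroid :
    natPolymatroid f + natPolymatroid g ⊆ natPolymatroid (f + g) := by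
  rintro _ ⟨_, ⟨z, hz, rfl⟩, _, ⟨w, hw, rfl⟩, rfl⟩
  exact ⟨z + w, fun S => by simpa [sum_add_distrib] using add_le_add (hz S) (hw S), by ext; simp⟩

theorem smul_subset_natPolymatroid (c : ℕ) :
    (c : ℝ) • natPolymatroid f ⊆ natPolymatroid (c • f) := by
  rintro _ ⟨_, ⟨z, hz, rfl⟩, rfl⟩
  exact ⟨c • z, fun S => by simpa [← mul_sum] using Nat.mul_le_mul_left c (hz S), by ext; simp⟩

theorem finsetSum_subset_natPolymatroid {κ : Type*} [DecidableEq κ] {s : Finset κ}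
    {A : κ → Set (ι → ℝ)} {F : κ → Finset ι → ℕ} (h : ∀ k ∈ s, A k ⊆ natPolymatroid (F k)) :
    ∑ k ∈ s, A k ⊆ natPolymatroid (∑ k ∈ s, F k) := by
  induction s using Finset.induction_on with
  | empty => simpa using zero_mem_natPolymatroid
  | insert k s hk ih =>
    rw [sum_insert hk, sum_insert hk]
    exact (Set.add_subset_add (h k (mem_insert_self k s))
      (ih fun k' hk' => h k' (mem_insert_of_mem hk'))).trans add_subset_natPolymatroid

end Polymatroid

section Splitting

variable {n : ℕ}

theorem le_of_sum_le_topSum {z : ι → ℕ} (hz : ∀ S, ∑ k ∈ S, z k ≤ topSum n #S) (i : ι) :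
    z i ≤ n := by
  simpa [topSum] using hz {i}

variable [Fintype ι] [DecidableEq ι]

/-- Ties are never tight: moving `j` into `S` and `i` out of it would give two sets whose sums
add up to `2 * topSum n #S`, while their bounds add up to one less. -/
theorem sum_lt_topSum_of_eq {z : ι → ℕ} (hz : ∀ S, ∑ k ∈ S, z k ≤ topSum n #S)
    (hι : Fintype.card ι ≤ n + 1) {i j : ι} (hzij : z i = z j) {S : Finset ι} (hi : i ∈ S)
    (hj : j ∉ S) : ∑ k ∈ S, z k < topSum n #S := by
  have hS : 1 ≤ #S := card_pos.2 ⟨i, hi⟩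
  have hSn : #S + 1 ≤ n + 1 :=
    (card_insert_of_notMem hj ▸ card_le_univ (insert j S)).trans hι
  have hins := hz (insert j S)
  have hera := hz (S.erase i)
  rw [sum_insert hj, card_insert_of_notMem hj, topSum, sum_range_succ, ← topSum] at hins
  rw [card_erase_of_mem hi] at hera
  have hsplit := sum_erase_add S z hi
  have htop : topSum n #S = topSum n (#S - 1) + (n - (#S - 1)) := by
    rw [topSum, topSum, ← sum_range_succ, Nat.sub_add_cancel hS]
  omega

theorem sum_le_topSum_add_single_two {u : ι → ℕ} {i j : ι}
    (hu : ∀ S, ∑ k ∈ S, (u + Pi.single i 1 + Pi.single j 1 : ι → ℕ) k ≤ topSum n #S)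
    (hι : Fintype.card ι ≤ n + 1) (hij : i ≠ j) (huij : u i = u j) (S : Finset ι) :
    ∑ k ∈ S, (u + Pi.single i 2 : ι → ℕ) k ≤ topSum n #S := by
  have hsum : ∀ v : ι → ℕ, ∀ a c, ∑ k ∈ S, (v + Pi.single a c : ι → ℕ) k =
      ∑ k ∈ S, v k + if a ∈ S then c else 0 := fun v a (c : ℕ) => by
    simp only [Pi.add_apply, sum_add_distrib, sum_pi_single']
  have h := hu S
  rw [hsum, hsum] at h
  rw [hsum]
  by_cases hi : i ∈ S <;> by_cases hj : j ∈ S <;> simp only [hi, hj, if_true, if_false] at h ⊢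
  · omega
  · have hstrict := sum_lt_topSum_of_eq hu hι (i := i) (j := j) (by simp [hij, hij.symm, huij]) hi hj
    rw [hsum, hsum] at hstrict
    simp only [hi, hj, if_true, if_false] at hstrict
    omega
  · omega
  · omega

theorem sum_sq_lt_sum_sq_add_single_two {u : ι → ℕ} {i j : ι} (hij : i ≠ j) (huij : u i = u j) :
    ∑ k, (u + Pi.single i 1 + Pi.single j 1 : ι → ℕ) k ^ 2 <
      ∑ k, (u + Pi.single i 2 : ι → ℕ) k ^ 2 := by
  have hsplit : ∀ F : ι → ℕ, ∑ k, F k = ∑ k ∈ univ \ {i, j}, F k + (F i + F j) := fun F => by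
    rw [← sum_sdiff (subset_univ {i, j}), sum_pair hij]
  have hrest : ∑ k ∈ univ \ {i, j}, (u + Pi.single i 1 + Pi.single j 1 : ι → ℕ) k ^ 2 =
      ∑ k ∈ univ \ {i, j}, (u + Pi.single i 2 : ι → ℕ) k ^ 2 :=
    sum_congr rfl fun k hk => by
      obtain ⟨hki, hkj⟩ : k ≠ i ∧ k ≠ j := by simpa [not_or] using hk
      simp [hki, hkj]
  rw [hsplit, hsplit, hrest, Nat.add_lt_add_iff_left]
  simp only [Pi.add_apply, Pi.single_eq_same, Pi.single_eq_of_ne hij, Pi.single_eq_of_ne hij.symm,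
    huij]
  nlinarith

theorem natPolymatroid_topSum_subset_convexHull (hι : Fintype.card ι ≤ n + 1) :
    natPolymatroid (fun S : Finset ι => topSum n #S) ⊆ convexHull ℝ (vertices ι n) := by
  rintro _ ⟨z, hz, rfl⟩
  induction hd : Fintype.card ι * n ^ 2 - ∑ k, z k ^ 2 using Nat.strong_induction_on generalizing z
    with | _ d ih =>
  by_cases hdist : ∀ i j, i ≠ j → z i ≠ 0 → z j ≠ 0 → z i ≠ z j
  · exact subset_convexHull ℝ _ ⟨z, le_of_sum_le_topSum hz, hdist, rfl⟩
  push Not at hdist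
  obtain ⟨i, j, hij, hi, hj, hzij⟩ := hdist
  -- `z = u + eᵢ + eⱼ` is the midpoint of `u + 2eᵢ` and `u + 2eⱼ`, which have larger sums of squares
  obtain ⟨u, rfl⟩ : ∃ u, z = u + Pi.single i 1 + Pi.single j 1 :=
    ⟨z - Pi.single i 1 - Pi.single j 1, by
      ext k; by_cases hki : k = i <;> by_cases hkj : k = j <;> simp_all <;> omega⟩
  have huij : u i = u j := by simpa [hij, hij.symm] using hzij
  have hsq_le : ∀ w : ι → ℕ, (∀ S, ∑ k ∈ S, w k ≤ topSum n #S) →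
      ∑ k, w k ^ 2 ≤ Fintype.card ι * n ^ 2 := fun w hw => by
    simpa using sum_le_sum fun k (_ : k ∈ univ) => Nat.pow_le_pow_left (le_of_sum_le_topSum hw k) 2
  have hz' : ∀ S, ∑ k ∈ S, (u + Pi.single j 1 + Pi.single i 1 : ι → ℕ) k ≤ topSum n #S := by
    simpa only [add_right_comm u] using hz
  have hw₁ := sum_le_topSum_add_single_two hz hι hij huij
  have hw₂ := sum_le_topSum_add_single_two hz' hι hij.symm huij.symm
  have hdescend : ∀ w : ι → ℕ, (∀ S, ∑ k ∈ S, w k ≤ topSum n #S) →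
      ∑ k, (u + Pi.single i 1 + Pi.single j 1 : ι → ℕ) k ^ 2 < ∑ k, w k ^ 2 →
      (fun k => (w k : ℝ)) ∈ convexHull ℝ (vertices ι n) := fun w hw hlt =>
    ih _ (by have := hsq_le w hw; omega) w hw rfl
  have hmem₁ := hdescend _ hw₁ (sum_sq_lt_sum_sq_add_single_two hij huij)
  have hmem₂ := hdescend _ hw₂ (by
    simpa only [add_right_comm u] using sum_sq_lt_sum_sq_add_single_two hij.symm huij.symm)
  convert convex_convexHull ℝ _ hmem₁ hmem₂ (by norm_num : (0 : ℝ) ≤ 1 / 2)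
    (by norm_num : (0 : ℝ) ≤ 1 / 2) (by norm_num) using 1
  ext k
  by_cases hki : k = i <;> by_cases hkj : k = j <;>
    simp [hki, hkj, hij, hij.symm, Pi.single_apply] <;> ring

end Splitting

section Pairs

variable [Fintype ι] [LinearOrder ι]

theorem card_filter_lt_meets_le (S : Finset ι) :
    #{p : ι × ι | p.1 < p.2 ∧ (p.1 ∈ S ∨ p.2 ∈ S)} ≤ ∑ k ∈ range #S, (Fintype.card ι - 1 - k) := by
  induction S using Finset.induction_on with
  | empty => simp
  | insert a S ha ih =>
    -- a new pair meeting `insert a S` joins `a` to a point outside `insert a S`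
    have hsub : ({p : ι × ι | p.1 < p.2 ∧ (p.1 ∈ insert a S ∨ p.2 ∈ insert a S)} : Finset _) ⊆
        ({p : ι × ι | p.1 < p.2 ∧ (p.1 ∈ S ∨ p.2 ∈ S)} : Finset _) ∪
          (insert a S)ᶜ.image fun b => (min a b, max a b) := by
      rintro ⟨p₁, p₂⟩ hp
      simp only [mem_filter, mem_univ, true_and, mem_insert] at hp
      by_cases hS : p₁ ∈ S ∨ p₂ ∈ S
      · exact mem_union_left _ (by simp [hp.1, hS])
      refine mem_union_right _ (mem_image.2 ?_)
      rcases hp with ⟨hlt, (rfl | h₁) | (rfl | h₂)⟩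
      · exact ⟨p₂, by simp_all [hlt.ne'], by simp [hlt.le]⟩
      · exact absurd (Or.inl h₁) hS
      · exact ⟨p₁, by simp_all [hlt.ne], by simp [hlt.le]⟩
      · exact absurd (Or.inr h₂) hS
    calc _ ≤ _ := card_le_card hsub
      _ ≤ _ := card_union_le _ _
      _ ≤ ∑ k ∈ range #S, (Fintype.card ι - 1 - k) + (Fintype.card ι - 1 - #S) := by
        refine add_le_add ih (card_image_le.trans ?_)
        rw [card_compl, card_insert_of_notMem ha]
        omega
      _ = _ := by rw [card_insert_of_notMem ha, sum_range_succ]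

theorem sum_filter_lt_add_swap {M : Type*} [AddCommMonoid M] (f : ι → ι → M)
    (hf : ∀ a, f a a = 0) :
    ∑ p ∈ ({p : ι × ι | p.1 < p.2} : Finset _), (f p.1 p.2 + f p.2 p.1) = ∑ a, ∑ b, f a b := by
  have hswap : ∑ p ∈ ({p : ι × ι | p.1 < p.2} : Finset _), f p.2 p.1 =
      ∑ p ∈ ({p : ι × ι | ¬ p.1 < p.2} : Finset _), f p.1 p.2 := by
    calc _ = ∑ p ∈ ({p : ι × ι | p.2 < p.1} : Finset _), f p.1 p.2 :=
          sum_equiv (Equiv.prodComm ι ι) (by simp) (by simp)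
      _ = _ := by
        refine sum_subset (fun p hp => by simpa using (mem_filter.1 hp).2.le) fun p hp hp' => ?_
        simp only [mem_filter, mem_univ, true_and, not_lt] at hp hp'
        rw [le_antisymm hp hp', hf]
  rw [sum_add_distrib, hswap, sum_filter_add_sum_filter_not, ← Fintype.sum_prod_type']

theorem natCast_mem_sum_triangles {K : ℕ} (π : ι ≃ Fin K) (r : ι → ℕ) (hr : ∀ i, r i ≤ π i) :
    (fun i => (r i : ℝ)) ∈ ∑ p ∈ ({p : ι × ι | p.1 < p.2} : Finset _),
      ({0, Pi.single p.1 1, Pi.single p.2 1} : Set (ι → ℝ)) := by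
  -- the pair `{a, b}` is oriented towards `a` when `π b` is one of the `r a` positions below `π a`
  set arc : ι → ι → ℝ := fun a b => if (π a : ℕ) - r a ≤ π b ∧ π b < π a then 1 else 0
  have hcount (a : ι) : ∑ b, arc a b = r a := by
    let lo : Fin K := ⟨π a - r a, by omega⟩
    have hIco : ({c : Fin K | (π a : ℕ) - r a ≤ c ∧ c < π a} : Finset _) = Ico lo (π a) := by
      ext c
      simp only [mem_filter, mem_univ, true_and, mem_Ico, Fin.le_def, lo]
    rw [Fintype.sum_equiv π _ (fun c => if (π a : ℕ) - r a ≤ c ∧ c < π a then (1 : ℝ) else 0)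
      fun _ => rfl, sum_boole, hIco, Fin.card_Ico]
    simp [lo, hr a]
  rw [Set.mem_finsetSum]
  refine ⟨fun p => Pi.single p.1 (arc p.1 p.2) + Pi.single p.2 (arc p.2 p.1), fun {p} _ => ?_, ?_⟩
  · simp only [arc]
    split_ifs with h₁ h₂ h₂
    · exact absurd h₁.2 h₂.2.asymm
    all_goals simp
  · rw [sum_filter_lt_add_swap (fun a b => Pi.single a (arc a b)) (by simp [arc])]
    ext k
    simp [Finset.sum_apply, Pi.single_apply, hcount]

end Pairs

theorem apply_le_of_monotone {m : ℕ} {g : Fin m → ℕ} (hg : Monotone g) (hlt : ∀ k, g k < m)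
    (hinj : ∀ k l, k ≠ l → g k ≠ 0 → g l ≠ 0 → g k ≠ g l) (k : Fin m) : g k ≤ k := by
  suffices h : ∀ d, ∀ k : Fin m, k + d + 1 = m → g k ≤ k from h (m - k - 1) k (by omega)
  intro d
  induction d with
  | zero => intro k hk; have := hlt k; omega
  | succ d ih =>
    intro k hk
    let k' : Fin m := ⟨k + 1, by omega⟩
    have hkk' : k ≠ k' := by simp [k', Fin.ext_iff]
    have hle : g k ≤ g k' := hg (by simp [k', Fin.le_def])
    have hk'val : (k' : ℕ) = k + 1 := rfl
    have hk' := ih k' (by omega)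
    have := hinj k k' hkk'
    omega

theorem exists_equiv_le {m : ℕ} (r : Fin m → ℕ) (hr : ∀ i, r i < m)
    (hdist : ∀ i j, i ≠ j → r i ≠ 0 → r j ≠ 0 → r i ≠ r j) :
    ∃ π : Fin m ≃ Fin m, ∀ i, r i ≤ π i := by
  refine ⟨(Tuple.sort r).symm, fun i => ?_⟩
  simpa only [Function.comp_apply, Equiv.apply_symm_apply] using
    apply_le_of_monotone (Tuple.monotone_sort r) (fun k => hr _)
      (fun k l hkl => hdist _ _ ((Tuple.sort r).injective.ne hkl)) ((Tuple.sort r).symm i)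

theorem Icc_subset_sum_convexHull_zero_single [Fintype ι] [DecidableEq ι] :
    Set.Icc (0 : ι → ℝ) 1 ⊆ ∑ i, convexHull ℝ {0, Pi.single i 1} := by
  intro u hu
  rw [Set.mem_finsetSum]
  refine ⟨fun i => u i • Pi.single i 1, fun {i} _ => ?_,
    by ext; simp [Finset.sum_apply, Pi.single_apply]⟩
  rw [convexHull_pair, segment_eq_image]
  exact ⟨u i, ⟨hu.1 i, hu.2 i⟩, by simp⟩

theorem mem_smul_Icc_zero_one {c : ℝ} (hc : 0 ≤ c) {v : ι → ℝ} (hv : 0 ≤ v) (hvc : ∀ i, v i ≤ c) :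
    v ∈ c • Set.Icc (0 : ι → ℝ) 1 := by
  rcases hc.eq_or_lt with rfl | hc
  · obtain rfl : v = 0 := funext fun i => le_antisymm (hvc i) (hv i)
    rw [Set.zero_smul_set (Set.nonempty_Icc.2 zero_le_one)]
    exact Set.zero_mem_zero
  · refine ⟨c⁻¹ • v, ⟨fun i => ?_, fun i => ?_⟩, smul_inv_smul₀ hc.ne' v⟩
    · simpa using mul_nonneg (inv_nonneg.2 hc.le) (hv i)
    · simpa [inv_mul_le_one₀ hc] using hvc i

theorem mul_add_sum_range_eq_topSum {m n s : ℕ} (hn : m ≤ n + 1) (hs : s ≤ m) :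
    (n + 1 - m) * s + ∑ k ∈ range s, (m - 1 - k) = topSum n s := by
  have hconst : (n + 1 - m) * s = ∑ _k ∈ range s, (n + 1 - m) := by simp [mul_comm]
  rw [hconst, ← sum_add_distrib, topSum]
  exact sum_congr rfl fun k hk => by have := mem_range.1 hk; omega

def minkowskiVertices (m c : ℕ) : Set (Fin m → ℝ) :=
  (c : ℝ) • ∑ i : Fin m, {0, Pi.single i 1} +
    ∑ p ∈ ({p : Fin m × Fin m | p.1 < p.2} : Finset _), {0, Pi.single p.1 1, Pi.single p.2 1}

section Minkowski

variable {m n : ℕ}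

theorem convexHull_minkowskiVertices (c : ℕ) :
    convexHull ℝ (minkowskiVertices m c) = (c : ℝ) • ∑ i : Fin m, convexHull ℝ {0, Pi.single i 1} +
      ∑ p ∈ ({p : Fin m × Fin m | p.1 < p.2} : Finset _),
        convexHull ℝ {0, Pi.single p.1 1, Pi.single p.2 1} := by
  rw [minkowskiVertices, convexHull_add, convexHull_smul, convexHull_sum, convexHull_sum]

theorem vertices_subset_convexHull_minkowskiVertices (hn : m ≤ n + 1) :
    vertices (Fin m) n ⊆ convexHull ℝ (minkowskiVertices m (n + 1 - m)) := by
  rintro _ ⟨y, hyn, hy, rfl⟩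
  set c := n + 1 - m
  -- the entries of `y` above `c` are distinct and less than `m`: they come from the triangles
  obtain ⟨π, hπ⟩ := exists_equiv_le (fun i => y i - c)
    (fun i => by have := hyn i; have := i.isLt; omega)
    fun i j hij hi hj => by have := hy i j hij; omega
  have hsplit : (fun i => (y i : ℝ)) =
      (fun i => ((min (y i) c : ℕ) : ℝ)) + fun i => ((y i - c : ℕ) : ℝ) := by
    ext i
    rw [Pi.add_apply, ← Nat.cast_add]
    exact_mod_cast (by omega : y i = min (y i) c + (y i - c))
  rw [hsplit, convexHull_minkowskiVertices]
  refine Set.add_mem_add (Set.smul_set_mono Icc_subset_sum_convexHull_zero_single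
    (mem_smul_Icc_zero_one c.cast_nonneg (fun i => by positivity) fun i => ?_)) ?_
  · exact_mod_cast min_le_right _ _
  · rw [← convexHull_sum]
    exact subset_convexHull ℝ _ (natCast_mem_sum_triangles π _ hπ)

theorem minkowskiVertices_subset_natPolymatroid (hn : m ≤ n + 1) :
    minkowskiVertices m (n + 1 - m) ⊆ natPolymatroid fun S => topSum n #S := by
  have hcube : ∑ i : Fin m, ({0, Pi.single i 1} : Set (Fin m → ℝ)) ⊆
      natPolymatroid (∑ i, fun S => if i ∈ S then 1 else 0) :=
    finsetSum_subset_natPolymatroid fun i _ => pair_subset_natPolymatroid i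
  have htriangles : ∑ p ∈ ({p : Fin m × Fin m | p.1 < p.2} : Finset _),
        ({0, Pi.single p.1 1, Pi.single p.2 1} : Set (Fin m → ℝ)) ⊆
      natPolymatroid (∑ p ∈ ({p : Fin m × Fin m | p.1 < p.2} : Finset _),
        fun S => if p.1 ∈ S ∨ p.2 ∈ S then 1 else 0) :=
    finsetSum_subset_natPolymatroid fun p _ => triangle_subset_natPolymatroid p.1 p.2
  refine (Set.add_subset_add ((Set.smul_set_mono hcube).trans (smul_subset_natPolymatroid _))
    htriangles).trans (add_subset_natPolymatroid.trans (natPolymatroid_mono fun S => ?_))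
  calc _ = (n + 1 - m) * #S + #{p : Fin m × Fin m | p.1 < p.2 ∧ (p.1 ∈ S ∨ p.2 ∈ S)} := by
        simp [sum_boole, filter_filter]
    _ ≤ (n + 1 - m) * #S + ∑ k ∈ range #S, (m - 1 - k) := by
        simpa using card_filter_lt_meets_le S
    _ = topSum n #S := mul_add_sum_range_eq_topSum hn (by simpa using card_le_univ S)

end Minkowski

end PartialPermutohedron

theorem partialPermutohedron_minkowski_general (m n : ℕ) (hn : m ≤ n + 1) :
    partialPermutohedron m n =
      ((n : ℝ) - m + 1) • (∑ i : Fin m, convexHull ℝ {(0 : Fin m → ℝ), Pi.single i 1}) +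
        ∑ p ∈ Finset.univ.filter (fun p : Fin m × Fin m => p.1 < p.2),
          convexHull ℝ {(0 : Fin m → ℝ), Pi.single p.1 1, Pi.single p.2 1} := by
  have hc : (n : ℝ) - m + 1 = ((n + 1 - m : ℕ) : ℝ) := by
    rw [Nat.cast_sub hn]
    push_cast
    ring
  rw [hc, ← PartialPermutohedron.convexHull_minkowskiVertices,
    PartialPermutohedron.partialPermutohedron_eq]
  apply (convexHull_min ?_ (convex_convexHull ℝ _)).antisymm
    (convexHull_min ?_ (convex_convexHull ℝ _))
  · exact PartialPermutohedron.vertices_subset_convexHull_minkowskiVertices hn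
  · exact (PartialPermutohedron.minkowskiVertices_subset_natPolymatroid hn).trans
      (PartialPermutohedron.natPolymatroid_topSum_subset_convexHull (by simpa using hn))

/-- for `n ≥ m-1`, `P(m,n)` equals the Minkowski sum
`(n-m+1)·∑_{i=1}^m conv{0,e_i} + ∑_{1≤i<j≤m} conv{0,e_i,e_j}`. -/
theorem partialPermutohedron_minkowski (m n : ℕ) (hm : 1 ≤ m) (hn : m ≤ n + 1) :
    partialPermutohedron m n =
      ((n : ℝ) - m + 1) • (∑ i : Fin m, convexHull ℝ {(0 : Fin m → ℝ), Pi.single i 1}) +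
        ∑ p ∈ Finset.univ.filter (fun p : Fin m × Fin m => p.1 < p.2),
          convexHull ℝ {(0 : Fin m → ℝ), Pi.single p.1 1, Pi.single p.2 1} :=
  partialPermutohedron_minkowski_general m n hn
end

section
/- For m ≥ 2, the parking function polytope P_m (the convex hull of all parking functions of length m) equals the translate of the partial permutohedron P(m,m-1) by the all-ones vector: P(m,m-1) = { x - (1,...,1) : x ∈ P_m }. -/
/-!
Adding one to a vector with entries in `{0, …, m - 1}` whose nonzero entries are distinct gives
a parking function, by the counting criterion `k ≤ #{t | y t ≤ k}` for `k ≤ m`: the entries `≥ k`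
are distinct values in `[k, m - 1]`. Conversely, a parking function `y` with two equal entries
`y i = y j ≥ 2` is the midpoint of the two parking functions obtained by moving a unit from `j`
to `i` or from `i` to `j`. Both have a larger `∑ y t ^ 2`, which is bounded by `m ^ 3`, so
iterating ends at parking functions whose entries `≥ 2` are distinct, i.e. at vertices of
`P(m, m - 1)` shifted by one.
-/

open Pointwise

/-- `y : Fin m → ℕ` is a parking function of length `m`: all entries are positive and
some rearrangement into nondecreasing order `r₁ ≤ … ≤ r_m` satisfies `r_i ≤ i`. -/
def IsParkingFunction {m : ℕ} (y : Fin m → ℕ) : Prop :=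
  (∀ i, 1 ≤ y i) ∧ ∃ σ : Equiv.Perm (Fin m),
    Monotone (y ∘ σ) ∧ ∀ i : Fin m, y (σ i) ≤ (i : ℕ) + 1

/-- The parking function polytope `P_m ⊆ ℝ^m`: the convex hull of all parking
functions of length `m`. -/
noncomputable def parkingFunctionPolytope (m : ℕ) : Set (Fin m → ℝ) :=
  convexHull ℝ {x : Fin m → ℝ | ∃ y : Fin m → ℕ,
    IsParkingFunction y ∧ x = fun i => (y i : ℝ)}

open Finset

namespace IsParkingFunction

variable {m : ℕ} {y : Fin m → ℕ}

lemma le_length (hy : IsParkingFunction y) (t : Fin m) : y t ≤ m := by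
  obtain ⟨-, σ, -, hle⟩ := hy
  simpa using (hle (σ.symm t)).trans (σ.symm t).isLt

lemma sum_sq_le (hy : IsParkingFunction y) : ∑ t, y t ^ 2 ≤ m * m ^ 2 :=
  calc ∑ t, y t ^ 2 ≤ ∑ _t : Fin m, m ^ 2 :=
        sum_le_sum fun t _ => Nat.pow_le_pow_left (hy.le_length t) 2
    _ = m * m ^ 2 := by simp

lemma le_card_filter_le (hy : IsParkingFunction y) {k : ℕ} (hk : k ≤ m) :
    k ≤ #{t | y t ≤ k} := by
  obtain ⟨-, σ, -, hle⟩ := hy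
  calc k = #{s : Fin m | s < k} := by rw [Fin.card_filter_val_lt, min_eq_right hk]
    _ ≤ #{t | y t ≤ k} := by
      refine card_le_card_of_injOn σ (fun s hs => ?_) σ.injective.injOn
      simp only [coe_filter, mem_univ, true_and, Set.mem_ofPred_eq] at hs ⊢
      exact (hle s).trans hs

end IsParkingFunction

lemma isParkingFunction_of_le_card_filter_le {m : ℕ} {y : Fin m → ℕ} (hpos : ∀ i, 1 ≤ y i)
    (hcard : ∀ k ≤ m, k ≤ #{t | y t ≤ k}) : IsParkingFunction y := by
  refine ⟨hpos, Tuple.sort y, Tuple.monotone_sort y, fun i => ?_⟩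
  by_contra! hlt
  have hsub : ({s | y (Tuple.sort y s) ≤ i + 1} : Finset (Fin m)) ⊆
      ({s | (s : ℕ) < i} : Finset (Fin m)) := by
    intro s hs
    simp only [mem_filter, mem_univ, true_and] at hs ⊢
    by_contra! his
    exact (Tuple.monotone_sort y his).not_gt (hs.trans_lt hlt)
  have hcount := hcard (i + 1) i.isLt
  rw [card_equiv (Tuple.sort y).symm (t := {s | y (Tuple.sort y s) ≤ i + 1}) (by simp)] at hcount
  have := (card_le_card hsub).trans_eq (by rw [Fin.card_filter_val_lt, min_eq_right i.isLt.le])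
  omega

lemma isParkingFunction_add_one {m : ℕ} {z : Fin m → ℕ} (hle : ∀ i, z i ≤ m - 1)
    (hdist : ∀ i j, i ≠ j → z i ≠ 0 → z j ≠ 0 → z i ≠ z j) :
    IsParkingFunction (fun t => z t + 1) := by
  refine isParkingFunction_of_le_card_filter_le (fun _ => Nat.le_add_left 1 _) fun k hk => ?_
  rcases Nat.eq_zero_or_pos k with rfl | hk0
  · exact Nat.zero_le _
  have hlarge : #{t | k ≤ z t} ≤ m - k := by
    calc #{t | k ≤ z t} ≤ #(Icc k (m - 1)) := by
          refine card_le_card_of_injOn z (fun t ht => ?_) fun a ha b hb hab => ?_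
          · simp only [coe_filter, mem_univ, true_and, Set.mem_ofPred_eq] at ht
            simpa using ⟨ht, hle t⟩
          · simp only [coe_filter, mem_univ, true_and, Set.mem_ofPred_eq] at ha hb
            by_contra hne
            exact hdist a b hne (by omega) (by omega) hab
      _ = m - k := by rw [Nat.card_Icc]; omega
  have hsplit := card_filter_add_card_filter_not (s := univ) (p := fun t => z t + 1 ≤ k)
  simp only [card_univ, Fintype.card_fin, not_le, Nat.lt_iff_add_one_le,
    Nat.add_le_add_iff_right] at hsplit
  omega

section MoveUnit

variable {ι : Type*} [DecidableEq ι]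

def moveUnit (y : ι → ℕ) (i j : ι) : ι → ℕ :=
  Function.update (Function.update y i (y i + 1)) j (y j - 1)

variable {y : ι → ℕ} {i j : ι}

@[simp] lemma moveUnit_apply_left (hij : i ≠ j) : moveUnit y i j i = y i + 1 := by
  simp [moveUnit, hij]

@[simp] lemma moveUnit_apply_right : moveUnit y i j j = y j - 1 := by
  simp [moveUnit]

lemma moveUnit_apply_of_ne {t : ι} (hti : t ≠ i) (htj : t ≠ j) : moveUnit y i j t = y t := by
  simp [moveUnit, hti, htj]

lemma moveUnit_add_moveUnit (hij : i ≠ j) (hi : 1 ≤ y i) (hj : 1 ≤ y j) (t : ι) :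
    moveUnit y i j t + moveUnit y j i t = 2 * y t := by
  by_cases hti : t = i
  · subst hti; simp [hij]; omega
  by_cases htj : t = j
  · subst htj; simp [Ne.symm hij]; omega
  · rw [moveUnit_apply_of_ne hti htj, moveUnit_apply_of_ne htj hti]; ring

lemma sum_sq_moveUnit [Fintype ι] (hij : i ≠ j) (heq : y i = y j) (hj : 1 ≤ y j) :
    ∑ t, moveUnit y i j t ^ 2 = ∑ t, y t ^ 2 + 2 := by
  have hsplit (f : ι → ℕ) : ∑ t, f t ^ 2 = f i ^ 2 + f j ^ 2 + ∑ t ∈ {i, j}ᶜ, f t ^ 2 := by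
    rw [← sum_pair (f := fun t => f t ^ 2) hij, sum_add_sum_compl]
  rw [hsplit, hsplit y, moveUnit_apply_left hij, moveUnit_apply_right, heq,
    sum_congr rfl fun t ht => by
      simp only [mem_compl, mem_insert, mem_singleton, not_or] at ht
      rw [moveUnit_apply_of_ne ht.1 ht.2]]
  obtain ⟨v, hv⟩ := Nat.exists_eq_add_of_le hj
  rw [hv, Nat.add_sub_cancel_left]
  ring

end MoveUnit

lemma isParkingFunction_moveUnit {m : ℕ} {y : Fin m → ℕ} (hy : IsParkingFunction y)
    {i j : Fin m} (hij : i ≠ j) (heq : y i = y j) (hj : 2 ≤ y j) :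
    IsParkingFunction (moveUnit y i j) := by
  set v := y j
  refine isParkingFunction_of_le_card_filter_le (fun t => ?_) fun k hk => ?_
  · by_cases hti : t = i
    · subst hti; simp [hij]
    by_cases htj : t = j
    · subst htj; simp; omega
    · rw [moveUnit_apply_of_ne hti htj]; exact hy.1 t
  by_cases hkv : k = v
  · -- at level `v`, the lowered coordinate `j` makes up for the raised coordinate `i`
    subst hkv
    have hj_notMem : j ∉ ({t | y t ≤ v - 1} : Finset (Fin m)) := by simp [v]; omega
    have hsub : insert j ({t | y t ≤ v - 1} : Finset (Fin m)) ⊆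
        ({t | moveUnit y i j t ≤ v} : Finset (Fin m)) := by
      intro t ht
      rcases mem_insert.mp ht with rfl | ht
      · simp [v]
      · simp only [mem_filter, mem_univ, true_and] at ht ⊢
        rw [moveUnit_apply_of_ne (t := t) (by rintro rfl; omega) (by rintro rfl; omega)]
        omega
    calc v = (v - 1) + 1 := by omega
      _ ≤ #{t | y t ≤ v - 1} + 1 := by gcongr; exact hy.le_card_filter_le (by omega)
      _ = #(insert j ({t | y t ≤ v - 1} : Finset (Fin m))) :=
          (card_insert_of_notMem hj_notMem).symm
      _ ≤ _ := card_le_card hsub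
  · have hsub : ({t | y t ≤ k} : Finset (Fin m)) ⊆
        ({t | moveUnit y i j t ≤ k} : Finset (Fin m)) := by
      intro t ht
      simp only [mem_filter, mem_univ, true_and] at ht ⊢
      by_cases hti : t = i
      · subst hti; rw [moveUnit_apply_left hij]; omega
      by_cases htj : t = j
      · subst htj; rw [moveUnit_apply_right]; omega
      · rwa [moveUnit_apply_of_ne hti htj]
    exact (hy.le_card_filter_le hk).trans (card_le_card hsub)

theorem IsParkingFunction.sub_one_mem_partialPermutohedron {m : ℕ} {y : Fin m → ℕ}
    (hy : IsParkingFunction y) : (fun t => (y t : ℝ) - 1) ∈ partialPermutohedron m (m - 1) := by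
  by_cases hdist : ∀ i j, i ≠ j → 2 ≤ y j → y i ≠ y j
  · refine subset_convexHull ℝ _ ⟨fun t => y t - 1, fun t => ?_, fun i j hij hi hj => ?_, ?_⟩
    · dsimp only
      have := hy.le_length t
      omega
    · dsimp only at hi hj ⊢
      have := hdist i j hij
      omega
    · funext t; push_cast [hy.1 t]; rfl
  push Not at hdist
  obtain ⟨i, j, hij, hj, heq⟩ := hdist
  have hi : 2 ≤ y i := heq ▸ hj
  have hup := (isParkingFunction_moveUnit hy hij heq hj).sub_one_mem_partialPermutohedron
  have hdown :=
    (isParkingFunction_moveUnit hy hij.symm heq.symm hi).sub_one_mem_partialPermutohedron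
  have hmid : (fun t => (y t : ℝ) - 1) = (1 / 2 : ℝ) • (fun t => (moveUnit y i j t : ℝ) - 1) +
      (1 / 2 : ℝ) • (fun t => (moveUnit y j i t : ℝ) - 1) := by
    funext t
    have hsum : (moveUnit y i j t : ℝ) + moveUnit y j i t = 2 * y t := by
      exact_mod_cast moveUnit_add_moveUnit hij (by omega) (by omega) t
    simp only [Pi.add_apply, Pi.smul_apply, smul_eq_mul]
    linarith
  rw [hmid]
  exact convex_convexHull ℝ _ hup hdown (by norm_num) (by norm_num) (by norm_num)
termination_by m * m ^ 2 - ∑ t, y t ^ 2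
decreasing_by
  · have := (isParkingFunction_moveUnit hy hij heq hj).sum_sq_le
    have := sum_sq_moveUnit hij heq (by omega)
    omega
  · have := (isParkingFunction_moveUnit hy hij.symm heq.symm hi).sum_sq_le
    have := sum_sq_moveUnit hij.symm heq.symm (by omega)
    omega

theorem partialPermutohedron_eq_translated_parking_general (m : ℕ) :
    partialPermutohedron m (m - 1) =
      {z : Fin m → ℝ | ∃ x ∈ parkingFunctionPolytope m, z = x - fun _ => 1} := by
  have htranslate : {z : Fin m → ℝ | ∃ x ∈ parkingFunctionPolytope m, z = x - fun _ => 1} =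
      (-fun _ => 1 : Fin m → ℝ) +ᵥ parkingFunctionPolytope m := by
    ext z
    simp [Set.mem_vadd_set, sub_eq_neg_add, eq_comm]
  rw [htranslate, parkingFunctionPolytope, ← convexHull_vadd]
  apply subset_antisymm
  · refine convexHull_mono ?_
    rintro _ ⟨z, hle, hdist, rfl⟩
    exact ⟨_, ⟨_, isParkingFunction_add_one hle hdist, rfl⟩, by ext; simp⟩
  · refine convexHull_min ?_ (convex_convexHull ℝ _)
    rintro _ ⟨_, ⟨y, hy, rfl⟩, rfl⟩
    convert hy.sub_one_mem_partialPermutohedron using 1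
    ext t
    simp [sub_eq_neg_add]

/-- for `m ≥ 2`, `P(m,m-1)` is the translate of the parking function
polytope `P_m` by `-(1,…,1)`. -/
theorem partialPermutohedron_eq_translated_parking (m : ℕ) (hm : 2 ≤ m) :
    partialPermutohedron m (m - 1) =
      {z : Fin m → ℝ | ∃ x ∈ parkingFunctionPolytope m, z = x - fun _ => 1} :=
  partialPermutohedron_eq_translated_parking_general m
end
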